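/- Let d ≥ 2 and p₁, p₂ ∈ [0,1]. The map W_{p₁} ⊗ (ϑ ∘ W_{p₂}) : M_d(ℂ) ⊗ M_d(ℂ) → M_d(ℂ) ⊗ M_d(ℂ) is decomposable if and only if ((d−1)/(d+1))·p₁p₂ + (1−p₁)p₂ + p₁(1−p₂) − (1−p₁)(1−p₂) ≥ 0. -/

import Mathlib

open scoped ComplexOrder Kronecker Matrix

namespace TensorDecomp

/-- The Choi matrix of a linear map between matrix algebras. -/
noncomputable def choi {A B : Type} [Fintype A] [DecidableEq A]
    (L : Matrix A A ℂ →ₗ[ℂ] Matrix B B ℂ) : Matrix (A × B) (A × B) ℂ :=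
  fun p q => L (Matrix.single p.1 q.1 1) p.2 q.2

/-- A map is positive if it maps positive semidefinite matrices to positive
semidefinite matrices. -/
def IsPositiveMap {A B : Type} [Fintype A] [Fintype B]
    (L : Matrix A A ℂ →ₗ[ℂ] Matrix B B ℂ) : Prop :=
  ∀ X : Matrix A A ℂ, X.PosSemidef → (L X).PosSemidef

/-- A map is completely positive iff its Choi matrix is positive semidefinite. -/
def IsCompletelyPositive {A B : Type} [Fintype A] [DecidableEq A] [Fintype B]
    (L : Matrix A A ℂ →ₗ[ℂ] Matrix B B ℂ) : Prop :=
  (choi L).PosSemidef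

/-- Matrix transposition as a linear map. -/
def transposeMap (A : Type) : Matrix A A ℂ →ₗ[ℂ] Matrix A A ℂ where
  toFun X := X.transpose
  map_add' X Y := Matrix.transpose_add X Y
  map_smul' c X := Matrix.transpose_smul c X

/-- A map is completely copositive iff transposition composed with it is
completely positive. -/
def IsCompletelyCopositive {A B : Type} [Fintype A] [DecidableEq A] [Fintype B]
    (L : Matrix A A ℂ →ₗ[ℂ] Matrix B B ℂ) : Prop :=
  IsCompletelyPositive (transposeMap B ∘ₗ L)

/-- A map is decomposable iff it is the sum of a completely positive map and the
transposition composed with a completely positive map. -/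
def IsDecomposable {A B : Type} [Fintype A] [DecidableEq A] [Fintype B]
    (L : Matrix A A ℂ →ₗ[ℂ] Matrix B B ℂ) : Prop :=
  ∃ T₁ T₂ : Matrix A A ℂ →ₗ[ℂ] Matrix B B ℂ,
    IsCompletelyPositive T₁ ∧ IsCompletelyPositive T₂ ∧ L = T₁ + transposeMap B ∘ₗ T₂

/-- The tensor product of a finite family of linear maps between matrix algebras,
characterized by `(⊗ₜ L t) (⊗ₜ X t) = ⊗ₜ (L t (X t))`. -/
noncomputable def mapTensorFamily {ι : Type} [Fintype ι] [DecidableEq ι]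
    {κ κ' : Type} [Fintype κ] [DecidableEq κ]
    (L : ι → (Matrix κ κ ℂ →ₗ[ℂ] Matrix κ' κ' ℂ)) :
    Matrix (ι → κ) (ι → κ) ℂ →ₗ[ℂ] Matrix (ι → κ') (ι → κ') ℂ where
  toFun X := fun k l => ∑ i : ι → κ, ∑ j : ι → κ,
    X i j * ∏ t, L t (Matrix.single (i t) (j t) 1) (k t) (l t)
  map_add' X Y := by
    funext k l
    simp [Matrix.add_apply, add_mul, Finset.sum_add_distrib]
    rfl
  map_smul' c X := by
    funext k l
    simp [Matrix.smul_apply, smul_eq_mul, Finset.mul_sum, mul_assoc]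
    change _ = c * _
    simp [Finset.mul_sum, mul_assoc]

/-- The `n`-th tensor power of a linear map between matrix algebras. -/
noncomputable def mapTensorPow {κ κ' : Type} [Fintype κ] [DecidableEq κ]
    (L : Matrix κ κ ℂ →ₗ[ℂ] Matrix κ' κ' ℂ) (n : ℕ) :
    Matrix (Fin n → κ) (Fin n → κ) ℂ →ₗ[ℂ] Matrix (Fin n → κ') (Fin n → κ') ℂ :=
  mapTensorFamily (fun _ : Fin n => L)

/-- The tensor product of two linear maps between matrix algebras, characterized by
`(L₁ ⊗ L₂)(X ⊗ Y) = L₁(X) ⊗ L₂(Y)`. -/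
noncomputable def mapTensor {A B C D : Type} [Fintype A] [DecidableEq A]
    [Fintype C] [DecidableEq C]
    (L₁ : Matrix A A ℂ →ₗ[ℂ] Matrix B B ℂ) (L₂ : Matrix C C ℂ →ₗ[ℂ] Matrix D D ℂ) :
    Matrix (A × C) (A × C) ℂ →ₗ[ℂ] Matrix (B × D) (B × D) ℂ where
  toFun X := fun k l => ∑ i : A × C, ∑ j : A × C,
    X i j * (L₁ (Matrix.single i.1 j.1 1) k.1 l.1 *
      L₂ (Matrix.single i.2 j.2 1) k.2 l.2)
  map_add' X Y := by
    funext k l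
    simp [Matrix.add_apply, add_mul, Finset.sum_add_distrib]
    rfl
  map_smul' c X := by
    funext k l
    simp [Matrix.smul_apply, smul_eq_mul, Finset.mul_sum, mul_assoc]
    change _ = c * _
    simp [Finset.mul_sum, mul_assoc]

/-- The adjoint of a linear map between matrix algebras with respect to the
Hilbert-Schmidt inner product `⟨A, B⟩ = Tr[Aᴴ B]`. -/
noncomputable def hsAdjoint {A B : Type} [Fintype A] [DecidableEq A] [Fintype B]
    (T : Matrix A A ℂ →ₗ[ℂ] Matrix B B ℂ) : Matrix B B ℂ →ₗ[ℂ] Matrix A A ℂ where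
  toFun Y := fun i j => ((T (Matrix.single i j 1))ᴴ * Y).trace
  map_add' X Y := by
    funext i j
    simp [Matrix.mul_add, Matrix.add_apply]
    rfl
  map_smul' c X := by
    funext i j
    simp [Matrix.mul_smul, Matrix.smul_apply]
    rfl

/-- The quantity `μ(P)` from Definition 2 of the paper. -/
noncomputable def mu {A B : Type} [Fintype A] [DecidableEq A] [Fintype B] [DecidableEq B]
    (P : Matrix A A ℂ →ₗ[ℂ] Matrix B B ℂ) : ℝ :=
  sInf { r : ℝ | ∃ T : Matrix A A ℂ →ₗ[ℂ] Matrix B B ℂ,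
    IsCompletelyPositive T ∧ hsAdjoint T (P 1) ≠ 0 ∧
    r = ((choi P * choi T).trace).re / ((hsAdjoint T (P 1)).trace).re }

/-- The unique linear map with the given Choi matrix. -/
noncomputable def ofChoi {A B : Type} [Fintype A] [Fintype B]
    (C : Matrix (A × B) (A × B) ℂ) : Matrix A A ℂ →ₗ[ℂ] Matrix B B ℂ where
  toFun X := fun k l => ∑ i : A, ∑ j : A, X i j * C (i, k) (j, l)
  map_add' X Y := by
    funext k l
    simp [Matrix.add_apply, add_mul, Finset.sum_add_distrib]
    rfl
  map_smul' c X := by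
    funext k l
    simp [Matrix.smul_apply, smul_eq_mul, Finset.mul_sum, mul_assoc]
    change _ = c * _
    simp [Finset.mul_sum, mul_assoc]

/-- The flip operator on `ℂ^d ⊗ ℂ^d`. -/
def flipOp (d : ℕ) : Matrix (Fin d × Fin d) (Fin d × Fin d) ℂ :=
  fun p q => if p.1 = q.2 ∧ p.2 = q.1 then 1 else 0

/-- The projection onto the symmetric subspace of `ℂ^d ⊗ ℂ^d`. -/
noncomputable def Psym (d : ℕ) : Matrix (Fin d × Fin d) (Fin d × Fin d) ℂ :=
  (1 / 2 : ℂ) • (1 + flipOp d)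

/-- The projection onto the antisymmetric subspace of `ℂ^d ⊗ ℂ^d`. -/
noncomputable def Pasym (d : ℕ) : Matrix (Fin d × Fin d) (Fin d × Fin d) ℂ :=
  (1 / 2 : ℂ) • (1 - flipOp d)

/-- The (unnormalized to trace one) Werner state with parameter `p`. -/
noncomputable def wernerState (d : ℕ) (p : ℝ) :
    Matrix (Fin d × Fin d) (Fin d × Fin d) ℂ :=
  ((p : ℂ) / ((d : ℂ) * ((d : ℂ) + 1) / 2)) • Psym d +
    (((1 - p : ℝ) : ℂ) / ((d : ℂ) * ((d : ℂ) - 1) / 2)) • Pasym d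

/-- The Werner map `W_p`, i.e. the unique linear map whose Choi matrix is the
Werner state `ρ_W(p)`. -/
noncomputable def wernerMap (d : ℕ) (p : ℝ) :
    Matrix (Fin d) (Fin d) ℂ →ₗ[ℂ] Matrix (Fin d) (Fin d) ℂ :=
  ofChoi (wernerState d p)

/-- Partial transposition (on the second tensor factor) of a bipartite matrix. -/
def ptranspose {A B : Type} (X : Matrix (A × B) (A × B) ℂ) :
    Matrix (A × B) (A × B) ℂ :=
  fun p q => X (p.1, q.2) (q.1, p.2)

/-- Partial transposition of all `B`-systems of a multipartite matrix whose
subsystems each consist of an `A`-part (first factor) and a `B`-part (second factor). -/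
def ptransposeAll {ι A B : Type} (X : Matrix (ι → A × B) (ι → A × B) ℂ) :
    Matrix (ι → A × B) (ι → A × B) ℂ :=
  fun p q => X (fun t => ((p t).1, (q t).2)) (fun t => ((q t).1, (p t).2))

/-- The tensor product of a finite family of matrices. -/
def tensorFamily {ι : Type} [Fintype ι] {κ : Type} (M : ι → Matrix κ κ ℂ) :
    Matrix (ι → κ) (ι → κ) ℂ :=
  fun p q => ∏ t, M t (p t) (q t)

/-- The normalized projections `P₀ = P_sym / d_sym` and `P₁ = P_asym / d_asym`. -/
noncomputable def Pnorm (d : ℕ) : Fin 2 → Matrix (Fin d × Fin d) (Fin d × Fin d) ℂ :=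
  ![((d : ℂ) * ((d : ℂ) + 1) / 2)⁻¹ • Psym d, ((d : ℂ) * ((d : ℂ) - 1) / 2)⁻¹ • Pasym d]

/-- The matrices `F(k,l)` from equation (10) of the paper (with `k, l` 0-based). -/
noncomputable def Fmat (d n m : ℕ) (k : Fin (n + 1)) (l : Fin (m + 1)) :
    Matrix ((Fin n ⊕ Fin m) → Fin d × Fin d) ((Fin n ⊕ Fin m) → Fin d × Fin d) ℂ :=
  ((Nat.factorial n * Nat.factorial m : ℂ))⁻¹ • ∑ f : (Fin n ⊕ Fin m) → Fin 2,
    if (∑ t : Fin n, ((f (Sum.inl t)) : ℕ)) = (k : ℕ) ∧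
        (∑ s : Fin m, ((f (Sum.inr s)) : ℕ)) = (l : ℕ) then
      tensorFamily (fun t => match t with
        | Sum.inl _ => Pnorm d (f t)
        | Sum.inr _ => ptranspose (Pnorm d (f t)))
    else 0

/-- The matrix `H_Q` from equation (9) of the paper (with indices 0-based). -/
noncomputable def HQ (d n m : ℕ) (Q : Matrix (Fin (n + 1)) (Fin (m + 1)) ℝ) :
    Matrix ((Fin n ⊕ Fin m) → Fin d × Fin d) ((Fin n ⊕ Fin m) → Fin d × Fin d) ℂ :=
  ∑ k : Fin (n + 1), ∑ l : Fin (m + 1), (Q k l : ℂ) • Fmat d n m k l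

/-- The matrix `V^m_d` from equation (8) of the paper (with indices 0-based). -/
noncomputable def Vmat (m d : ℕ) : Matrix (Fin (m + 1)) (Fin (m + 1)) ℝ :=
  fun a b => (-1 : ℝ) ^ (a : ℕ) *
    ∑ t ∈ Finset.Icc ((a : ℕ) + (b : ℕ) - m) (min (a : ℕ) (b : ℕ)),
      ((a : ℕ).choose t : ℝ) * ((m - (a : ℕ)).choose ((b : ℕ) - t) : ℝ) *
        (-(((d : ℝ) + 1) / ((d : ℝ) - 1))) ^ t

/-- The vector `v^n_p` from equation (12) of the paper (with index 0-based). -/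
noncomputable def vvec (d n : ℕ) (p : ℝ) : Fin (n + 1) → ℝ :=
  fun k => (((d : ℝ) + 1) / ((d : ℝ) - 1)) ^ (k : ℕ) * (1 - p) ^ (k : ℕ) * p ^ (n - (k : ℕ))

/-- The mixed tensor power `W_{p₁}^{⊗n} ⊗ (ϑ ∘ W_{p₂})^{⊗m}` of Werner maps. -/
noncomputable def wernerMixed (d n m : ℕ) (p₁ p₂ : ℝ) :
    Matrix ((Fin n ⊕ Fin m) → Fin d) ((Fin n ⊕ Fin m) → Fin d) ℂ →ₗ[ℂ]
      Matrix ((Fin n ⊕ Fin m) → Fin d) ((Fin n ⊕ Fin m) → Fin d) ℂ :=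
  mapTensorFamily (fun t => match t with
    | Sum.inl _ => wernerMap d p₁
    | Sum.inr _ => transposeMap (Fin d) ∘ₗ wernerMap d p₂)

/-! ### Auxiliary machinery -/

section Aux

variable {d : ℕ}

/-- The (unnormalized) maximally-entangled-state matrix `Ω`. -/
def Om (d : ℕ) : Matrix (Fin d × Fin d) (Fin d × Fin d) ℂ :=
  fun p q => if p.1 = p.2 ∧ q.1 = q.2 then 1 else 0

lemma flip_mul_flip (d : ℕ) : flipOp d * flipOp d = 1 := by
  ext p q
  simp only [Matrix.mul_apply, flipOp, Matrix.one_apply, Fintype.sum_prod_type, ite_and]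
  rcases p with ⟨p1, p2⟩; rcases q with ⟨q1, q2⟩
  simp only [Finset.sum_ite_eq, Finset.sum_ite_eq', Prod.ext_iff, eq_comm, Finset.mem_univ,
    if_true, mul_ite, mul_one, mul_zero]
  by_cases h : p1 = q1 <;> simp [h]

lemma om_mul_om (d : ℕ) : Om d * Om d = (d : ℂ) • Om d := by
  ext p q
  simp only [Matrix.mul_apply, Om, Matrix.smul_apply, Fintype.sum_prod_type, ite_and]
  rcases p with ⟨p1, p2⟩; rcases q with ⟨q1, q2⟩
  by_cases h1 : p1 = p2 <;> by_cases h2 : q1 = q2 <;>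
    simp [h1, h2, Finset.sum_ite_eq, Finset.sum_ite_eq', smul_eq_mul, mul_comm]

lemma flip_conjTranspose (d : ℕ) : (flipOp d)ᴴ = flipOp d := by
  ext p q
  simp only [Matrix.conjTranspose_apply, flipOp]
  rcases p with ⟨p1, p2⟩; rcases q with ⟨q1, q2⟩
  by_cases h : q1 = p2 ∧ q2 = p1
  · obtain ⟨h1, h2⟩ := h; simp [h1, h2]
  · rw [if_neg h, if_neg]
    · simp
    · rintro ⟨h1, h2⟩; exact h ⟨h2.symm, h1.symm⟩

lemma om_conjTranspose (d : ℕ) : (Om d)ᴴ = Om d := by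
  ext p q
  simp only [Matrix.conjTranspose_apply, Om]
  rcases p with ⟨p1, p2⟩; rcases q with ⟨q1, q2⟩
  by_cases h1 : p1 = p2 <;> by_cases h2 : q1 = q2 <;> simp [h1, h2, and_comm]

lemma trace_flip (d : ℕ) : (flipOp d).trace = (d : ℂ) := by
  simp only [Matrix.trace, Matrix.diag, flipOp, Fintype.sum_prod_type, ite_and]
  simp [Finset.sum_ite_eq', eq_comm]

lemma trace_om (d : ℕ) : (Om d).trace = (d : ℂ) := by
  simp only [Matrix.trace, Matrix.diag, Om, Fintype.sum_prod_type, ite_and]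
  simp [Finset.sum_ite_eq']

/-- tensor across the (1,3|2,4) index split -/
def tens (M N : Matrix (Fin d × Fin d) (Fin d × Fin d) ℂ) :
    Matrix ((Fin d × Fin d) × (Fin d × Fin d)) ((Fin d × Fin d) × (Fin d × Fin d)) ℂ :=
  fun p q => M (p.1.1, p.2.1) (q.1.1, q.2.1) * N (p.1.2, p.2.2) (q.1.2, q.2.2)

lemma tens_mul (M N M' N' : Matrix (Fin d × Fin d) (Fin d × Fin d) ℂ) :
    tens M N * tens M' N' = tens (M * M') (N * N') := by
  ext p q
  simp only [Matrix.mul_apply, tens, Fintype.sum_prod_type]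
  rw [Finset.sum_mul_sum]
  refine Finset.sum_congr rfl fun r1 _ => Finset.sum_congr rfl fun r2 _ => ?_
  rw [Finset.sum_mul_sum]
  refine Finset.sum_congr rfl fun s1 _ => Finset.sum_congr rfl fun s2 _ => ?_
  ring

lemma tens_conjTranspose (M N : Matrix (Fin d × Fin d) (Fin d × Fin d) ℂ) :
    (tens M N)ᴴ = tens Mᴴ Nᴴ := by
  ext p q
  simp [tens, Matrix.conjTranspose_apply, mul_comm]

lemma tens_smul_left (c : ℂ) (M N : Matrix (Fin d × Fin d) (Fin d × Fin d) ℂ) :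
    tens (c • M) N = c • tens M N := by
  ext p q; simp [tens, Matrix.smul_apply, mul_assoc]

lemma tens_smul_right (c : ℂ) (M N : Matrix (Fin d × Fin d) (Fin d × Fin d) ℂ) :
    tens M (c • N) = c • tens M N := by
  ext p q; simp [tens, Matrix.smul_apply]; ring

lemma tens_add_left (M M' N : Matrix (Fin d × Fin d) (Fin d × Fin d) ℂ) :
    tens (M + M') N = tens M N + tens M' N := by
  ext p q; simp [tens, Matrix.add_apply, add_mul]

lemma tens_add_right (M N N' : Matrix (Fin d × Fin d) (Fin d × Fin d) ℂ) :
    tens M (N + N') = tens M N + tens M N' := by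
  ext p q; simp [tens, Matrix.add_apply, mul_add]

lemma tens_sub_left (M M' N : Matrix (Fin d × Fin d) (Fin d × Fin d) ℂ) :
    tens (M - M') N = tens M N - tens M' N := by
  ext p q; simp [tens, Matrix.sub_apply, sub_mul]

lemma tens_sub_right (M N N' : Matrix (Fin d × Fin d) (Fin d × Fin d) ℂ) :
    tens M (N - N') = tens M N - tens M N' := by
  ext p q; simp [tens, Matrix.sub_apply, mul_sub]

lemma trace_tens (M N : Matrix (Fin d × Fin d) (Fin d × Fin d) ℂ) :
    (tens M N).trace = M.trace * N.trace := by
  simp only [Matrix.trace, Matrix.diag, tens, Fintype.sum_prod_type]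
  rw [Finset.sum_mul_sum]
  refine Finset.sum_congr rfl fun r1 _ => Finset.sum_congr rfl fun r2 _ => ?_
  rw [Finset.sum_mul_sum]

lemma ptranspose_tens (M N : Matrix (Fin d × Fin d) (Fin d × Fin d) ℂ) :
    ptranspose (tens M N) = tens (ptranspose M) (ptranspose N) := rfl

lemma ptranspose_add {A B : Type} (X Y : Matrix (A × B) (A × B) ℂ) :
    ptranspose (X + Y) = ptranspose X + ptranspose Y := rfl

lemma ptranspose_sub {A B : Type} (X Y : Matrix (A × B) (A × B) ℂ) :
    ptranspose (X - Y) = ptranspose X - ptranspose Y := rfl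

lemma ptranspose_smul {A B : Type} (c : ℂ) (X : Matrix (A × B) (A × B) ℂ) :
    ptranspose (c • X) = c • ptranspose X := rfl

lemma ptranspose_one : ptranspose (1 : Matrix (Fin d × Fin d) (Fin d × Fin d) ℂ) = 1 := by
  funext p q
  simp only [ptranspose, Matrix.one_apply, Prod.ext_iff]
  rcases p with ⟨p1, p2⟩; rcases q with ⟨q1, q2⟩
  simp [and_comm, eq_comm]

lemma ptranspose_flip : ptranspose (flipOp d) = Om d := by
  funext p q
  simp only [ptranspose, flipOp, Om]
  rcases p with ⟨p1, p2⟩; rcases q with ⟨q1, q2⟩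
  simp [eq_comm]

lemma ptranspose_om : ptranspose (Om d) = flipOp d := by
  funext p q
  simp only [ptranspose, flipOp, Om]
  rcases p with ⟨p1, p2⟩; rcases q with ⟨q1, q2⟩
  simp [eq_comm]

/-! ### Choi machinery -/

lemma ofChoi_apply {A B : Type} [Fintype A] [Fintype B]
    (C : Matrix (A × B) (A × B) ℂ) (X : Matrix A A ℂ) (k l : B) :
    ofChoi C X k l = ∑ i : A, ∑ j : A, X i j * C (i, k) (j, l) := rfl

lemma mapTensor_apply {A B C D : Type} [Fintype A] [DecidableEq A]
    [Fintype C] [DecidableEq C]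
    (L₁ : Matrix A A ℂ →ₗ[ℂ] Matrix B B ℂ) (L₂ : Matrix C C ℂ →ₗ[ℂ] Matrix D D ℂ)
    (X : Matrix (A × C) (A × C) ℂ) (k l : B × D) :
    mapTensor L₁ L₂ X k l = ∑ i : A × C, ∑ j : A × C,
      X i j * (L₁ (Matrix.single i.1 j.1 1) k.1 l.1 *
        L₂ (Matrix.single i.2 j.2 1) k.2 l.2) := rfl

lemma choi_ofChoi {A B : Type} [Fintype A] [DecidableEq A] [Fintype B]
    (C : Matrix (A × B) (A × B) ℂ) : choi (ofChoi C) = C := by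
  ext p q
  simp only [choi, ofChoi_apply, LinearMap.coe_mk, AddHom.coe_mk, Matrix.single,
    Matrix.of_apply, ite_and]
  simp [Finset.sum_ite_eq, ite_mul, zero_mul]

lemma ofChoi_choi {A B : Type} [Fintype A] [DecidableEq A] [Fintype B]
    (L : Matrix A A ℂ →ₗ[ℂ] Matrix B B ℂ) : ofChoi (choi L) = L := by
  refine LinearMap.ext fun X => ?_
  funext k l
  have hstd : ∀ i j : A, Matrix.single i j (X i j)
      = X i j • Matrix.single i j (1 : ℂ) := fun i j => by
    rw [Matrix.smul_single, smul_eq_mul, mul_one]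
  have hLX : L X = ∑ i : A, ∑ j : A, X i j • L (Matrix.single i j 1) := by
    conv_lhs => rw [Matrix.matrix_eq_sum_single X]
    rw [map_sum]
    refine Finset.sum_congr rfl fun i _ => ?_
    rw [map_sum]
    refine Finset.sum_congr rfl fun j _ => ?_
    rw [hstd i j, map_smul]
  rw [hLX]
  simp [ofChoi_apply, choi, Matrix.sum_apply, Matrix.smul_apply, smul_eq_mul]

lemma ofChoi_add {A B : Type} [Fintype A] [Fintype B]
    (C D : Matrix (A × B) (A × B) ℂ) : ofChoi (C + D) = ofChoi C + ofChoi D := by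
  refine LinearMap.ext fun X => ?_
  funext k l
  simp [ofChoi_apply, Matrix.add_apply, mul_add, Finset.sum_add_distrib]

lemma choi_add {A B : Type} [Fintype A] [DecidableEq A] [Fintype B]
    (T₁ T₂ : Matrix A A ℂ →ₗ[ℂ] Matrix B B ℂ) : choi (T₁ + T₂) = choi T₁ + choi T₂ := by
  ext p q
  simp [choi, Matrix.add_apply]

lemma choi_transpose_comp {A B : Type} [Fintype A] [DecidableEq A] [Fintype B]
    (T : Matrix A A ℂ →ₗ[ℂ] Matrix B B ℂ) :
    choi (transposeMap B ∘ₗ T) = ptranspose (choi T) := rfl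

end Aux
section Aux2

variable {d : ℕ}

lemma psd_smul_real {n : Type} [Fintype n] {M : Matrix n n ℂ} (hM : M.PosSemidef) {c : ℝ}
    (hc : 0 ≤ c) : (((c : ℝ) : ℂ) • M).PosSemidef := by
  refine Matrix.PosSemidef.of_dotProduct_mulVec_nonneg ?_ fun x => ?_
  · have h1 := hM.1
    unfold Matrix.IsHermitian at h1 ⊢
    rw [Matrix.conjTranspose_smul, h1, Complex.star_def, Complex.conj_ofReal]
  · rw [Matrix.smul_mulVec, dotProduct_smul, smul_eq_mul]
    exact mul_nonneg (by exact_mod_cast Complex.zero_le_real.mpr hc) (hM.dotProduct_mulVec_nonneg x)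

lemma psd_trace_nonneg {n : Type} [Fintype n] [DecidableEq n] {M : Matrix n n ℂ}
    (hM : M.PosSemidef) : 0 ≤ M.trace := by
  have h : ∀ i, 0 ≤ M i i := fun i => by
    have h2 := hM.dotProduct_mulVec_nonneg (Pi.single i 1)
    have hs : star (Pi.single i (1 : ℂ)) = (Pi.single i 1 : n → ℂ) := by
      funext j
      rw [Pi.star_apply]
      by_cases h : j = i
      · subst h
        rw [Pi.single_eq_same]
        exact star_one ℂ
      · rw [Pi.single_eq_of_ne h]
        exact star_zero ℂ
    rw [hs, Matrix.mulVec_single, single_dotProduct] at h2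
    simpa using h2
  exact Finset.sum_nonneg fun i _ => h i

open scoped MatrixOrder in
lemma psd_trace_mul_nonneg {n : Type} [Fintype n] [DecidableEq n] {P Q : Matrix n n ℂ}
    (hP : P.PosSemidef) (hQ : Q.PosSemidef) : 0 ≤ (P * Q).trace := by
  have hs : (CFC.sqrt Q)ᴴ = CFC.sqrt Q := (Matrix.nonneg_iff_posSemidef.mp (CFC.sqrt_nonneg Q)).1
  have h1 : P * Q = P * CFC.sqrt Q * CFC.sqrt Q := by rw [mul_assoc, CFC.sqrt_mul_sqrt_self Q hQ.nonneg]
  have h2 : (P * CFC.sqrt Q * CFC.sqrt Q).trace = (CFC.sqrt Q * P * CFC.sqrt Q).trace := by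
    rw [Matrix.trace_mul_cycle]
  have h3 : ((CFC.sqrt Q)ᴴ * P * CFC.sqrt Q).PosSemidef := hP.conjTranspose_mul_mul_same _
  rw [hs] at h3
  rw [h1, h2]
  exact psd_trace_nonneg h3

lemma tens_proj_psd {M N : Matrix (Fin d × Fin d) (Fin d × Fin d) ℂ}
    (hM : Mᴴ = M) (hM2 : M * M = M) (hN : Nᴴ = N) (hN2 : N * N = N) :
    (tens M N).PosSemidef := by
  have h : tens M N = (tens M N)ᴴ * tens M N := by
    rw [tens_conjTranspose, hM, hN, tens_mul, hM2, hN2]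
  rw [h]
  exact Matrix.posSemidef_conjTranspose_mul_self _

/-- `Ω/d` -/
noncomputable def Ed (d : ℕ) : Matrix (Fin d × Fin d) (Fin d × Fin d) ℂ :=
  ((d : ℂ))⁻¹ • Om d

/-- `1 - Ω/d` -/
noncomputable def E0 (d : ℕ) : Matrix (Fin d × Fin d) (Fin d × Fin d) ℂ :=
  1 - ((d : ℂ))⁻¹ • Om d

lemma half_star : star ((1:ℂ)/2) = (1:ℂ)/2 := by
  rw [Complex.star_def, map_div₀, map_one]
  norm_num [Complex.ext_iff]

lemma psym_herm (d : ℕ) : (Psym d)ᴴ = Psym d := by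
  unfold Psym
  rw [Matrix.conjTranspose_smul, Matrix.conjTranspose_add, Matrix.conjTranspose_one,
    flip_conjTranspose, half_star]

lemma pasym_herm (d : ℕ) : (Pasym d)ᴴ = Pasym d := by
  unfold Pasym
  rw [Matrix.conjTranspose_smul, Matrix.conjTranspose_sub, Matrix.conjTranspose_one,
    flip_conjTranspose, half_star]

lemma ed_herm (d : ℕ) : (Ed d)ᴴ = Ed d := by
  unfold Ed
  rw [Matrix.conjTranspose_smul, om_conjTranspose, star_inv₀, star_natCast]

lemma e0_herm (d : ℕ) : (E0 d)ᴴ = E0 d := by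
  unfold E0
  rw [Matrix.conjTranspose_sub, Matrix.conjTranspose_one, Matrix.conjTranspose_smul,
    om_conjTranspose, star_inv₀, star_natCast]

lemma psym_sq (d : ℕ) : Psym d * Psym d = Psym d := by
  unfold Psym
  simp only [Matrix.smul_mul, Matrix.mul_smul, smul_smul, add_mul, mul_add, one_mul, mul_one,
    flip_mul_flip]
  rw [add_comm (flipOp d) (1 : Matrix (Fin d × Fin d) (Fin d × Fin d) ℂ), ← add_smul]
  norm_num

lemma pasym_sq (d : ℕ) : Pasym d * Pasym d = Pasym d := by
  unfold Pasym
  simp only [Matrix.smul_mul, Matrix.mul_smul, smul_smul, sub_mul, mul_sub, one_mul, mul_one,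
    flip_mul_flip]
  rw [show flipOp d - (1 : Matrix (Fin d × Fin d) (Fin d × Fin d) ℂ)
      = -(1 - flipOp d) from by abel, smul_neg, sub_neg_eq_add, ← add_smul]
  norm_num

lemma ed_sq (hd : (d : ℂ) ≠ 0) : Ed d * Ed d = Ed d := by
  unfold Ed
  rw [Matrix.smul_mul, Matrix.mul_smul, smul_smul, om_mul_om, smul_smul]
  congr 1
  field_simp

lemma e0_sq (hd : (d : ℂ) ≠ 0) : E0 d * E0 d = E0 d := by
  unfold E0
  have h : ((d : ℂ))⁻¹ • Om d * (((d : ℂ))⁻¹ • Om d) = ((d : ℂ))⁻¹ • Om d := ed_sq hd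
  simp only [sub_mul, mul_sub, one_mul, mul_one, h]
  abel

lemma wernerMap_basis (d : ℕ) (p : ℝ) (i j k l : Fin d) :
    wernerMap d p (Matrix.single i j 1) k l = wernerState d p (i, k) (j, l) := by
  have h : choi (wernerMap d p) = wernerState d p := choi_ofChoi (wernerState d p)
  calc wernerMap d p (Matrix.single i j 1) k l
      = choi (wernerMap d p) ((i, k)) ((j, l)) := rfl
    _ = wernerState d p (i, k) (j, l) := by rw [h]

lemma choi_mapTensor (d : ℕ) (p₁ p₂ : ℝ) :
    choi (mapTensor (wernerMap d p₁) (transposeMap (Fin d) ∘ₗ wernerMap d p₂)) =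
      tens (wernerState d p₁) (ptranspose (wernerState d p₂)) := by
  ext p q
  rcases p with ⟨⟨a1, a2⟩, b1, b2⟩
  rcases q with ⟨⟨a1', a2'⟩, b1', b2'⟩
  show (mapTensor _ _) (Matrix.single (a1, a2) (a1', a2') 1) (b1, b2) (b1', b2') = _
  have std_apply : ∀ (i j a b : Fin d × Fin d),
      Matrix.single i j (1 : ℂ) a b = if i = a ∧ j = b then 1 else 0 := fun i j a b => rfl
  simp only [mapTensor_apply, LinearMap.coe_mk, AddHom.coe_mk, std_apply, ite_and]
  simp only [ite_mul, zero_mul, one_mul]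
  rw [Finset.sum_eq_single ((a1, a2) : Fin d × Fin d)
      (fun b _ hb => by simp [Ne.symm hb])
      (fun h => absurd (Finset.mem_univ _) h)]
  rw [Finset.sum_eq_single ((a1', a2') : Fin d × Fin d)
      (fun b _ hb => by simp [Ne.symm hb])
      (fun h => absurd (Finset.mem_univ _) h)]
  simp only [if_pos rfl]
  simp only [LinearMap.comp_apply, transposeMap, LinearMap.coe_mk, AddHom.coe_mk,
    Matrix.transpose_apply]
  rw [wernerMap_basis, wernerMap_basis]
  rfl

end Aux2
section Aux3

variable {d : ℕ}

lemma dC0 (hd : 2 ≤ d) : (d : ℂ) ≠ 0 := Nat.cast_ne_zero.mpr (by omega)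

lemma dCp (hd : 2 ≤ d) : (d : ℂ) + 1 ≠ 0 := by
  have : ((d + 1 : ℕ) : ℂ) ≠ 0 := Nat.cast_ne_zero.mpr (by omega)
  push_cast at this
  exact this

lemma dCm (hd : 2 ≤ d) : (d : ℂ) - 1 ≠ 0 := by
  rw [sub_ne_zero]
  intro h
  have : ((d : ℕ) : ℂ) = ((1 : ℕ) : ℂ) := by push_cast; exact h
  have := Nat.cast_injective this
  omega

/-- α coefficient of the Werner state -/
noncomputable def wA (d : ℕ) (p : ℝ) : ℂ :=
  (p : ℂ) / ((d : ℂ) * ((d : ℂ) + 1)) + (1 - (p : ℂ)) / ((d : ℂ) * ((d : ℂ) - 1))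

/-- β coefficient of the Werner state -/
noncomputable def wB (d : ℕ) (p : ℝ) : ℂ :=
  (p : ℂ) / ((d : ℂ) * ((d : ℂ) + 1)) - (1 - (p : ℂ)) / ((d : ℂ) * ((d : ℂ) - 1))

lemma wernerState_eq (hd : 2 ≤ d) (p : ℝ) :
    wernerState d p = wA d p • 1 + wB d p • flipOp d := by
  unfold wernerState Psym Pasym wA wB
  have h0 := dC0 hd; have hp := dCp hd; have hm := dCm hd
  match_scalars <;> push_cast <;> field_simp <;> ring

lemma ptr_wernerState (hd : 2 ≤ d) (p : ℝ) :
    ptranspose (wernerState d p) = wA d p • 1 + wB d p • Om d := by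
  rw [wernerState_eq hd p, ptranspose_add, ptranspose_smul, ptranspose_smul, ptranspose_one,
    ptranspose_flip]

lemma isDecomposable_iff {A B : Type} [Fintype A] [DecidableEq A] [Fintype B] [DecidableEq B]
    (L : Matrix A A ℂ →ₗ[ℂ] Matrix B B ℂ) :
    IsDecomposable L ↔ ∃ P R : Matrix (A × B) (A × B) ℂ, P.PosSemidef ∧ R.PosSemidef ∧
      choi L = P + ptranspose R := by
  constructor
  · rintro ⟨T₁, T₂, h1, h2, hL⟩
    exact ⟨choi T₁, choi T₂, h1, h2, by rw [hL, choi_add, choi_transpose_comp]⟩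
  · rintro ⟨P, R, hP, hR, hC⟩
    refine ⟨ofChoi P, ofChoi R, ?_, ?_, ?_⟩
    · show (choi (ofChoi P)).PosSemidef
      rwa [choi_ofChoi]
    · show (choi (ofChoi R)).PosSemidef
      rwa [choi_ofChoi]
    · have h : choi (ofChoi P + transposeMap B ∘ₗ ofChoi R) = choi L := by
        rw [choi_add, choi_transpose_comp, choi_ofChoi, choi_ofChoi, hC]
      calc L = ofChoi (choi L) := (ofChoi_choi L).symm
        _ = ofChoi (choi (ofChoi P + transposeMap B ∘ₗ ofChoi R)) := by rw [h]
        _ = _ := ofChoi_choi _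

lemma decomposable_of_coeffs (hd : 2 ≤ d) (p₁ p₂ : ℝ)
    (l1 l2 l3 l4 m1 m2 m3 m4 : ℝ)
    (hl1 : 0 ≤ l1) (hl2 : 0 ≤ l2) (hl3 : 0 ≤ l3) (hl4 : 0 ≤ l4)
    (hm1 : 0 ≤ m1) (hm2 : 0 ≤ m2) (hm3 : 0 ≤ m3) (hm4 : 0 ≤ m4)
    (hG1 : (l3 : ℂ) / 2 + (l4 : ℂ) / 2 + (m3 : ℂ) / 2 + (m4 : ℂ) / 2 = wA d p₁ * wA d p₂)
    (hG2 : (l1 : ℂ) / (2 * d) + (l2 : ℂ) / (2 * d) - (l3 : ℂ) / (2 * d) - (l4 : ℂ) / (2 * d)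
      + (m3 : ℂ) / 2 - (m4 : ℂ) / 2 = wA d p₁ * wB d p₂)
    (hG3 : (l3 : ℂ) / 2 - (l4 : ℂ) / 2 + (m1 : ℂ) / (2 * d) + (m2 : ℂ) / (2 * d)
      - (m3 : ℂ) / (2 * d) - (m4 : ℂ) / (2 * d) = wB d p₁ * wA d p₂)
    (hG4 : (l1 : ℂ) / (2 * d) - (l2 : ℂ) / (2 * d) - (l3 : ℂ) / (2 * d) + (l4 : ℂ) / (2 * d)
      + (m1 : ℂ) / (2 * d) - (m2 : ℂ) / (2 * d) - (m3 : ℂ) / (2 * d) + (m4 : ℂ) / (2 * d)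
      = wB d p₁ * wB d p₂) :
    IsDecomposable (mapTensor (wernerMap d p₁) (transposeMap (Fin d) ∘ₗ wernerMap d p₂)) := by
  have h0 := dC0 hd
  rw [isDecomposable_iff]
  refine ⟨((l1 : ℂ)) • tens (Psym d) (Ed d) + ((l2 : ℂ)) • tens (Pasym d) (Ed d) +
      ((l3 : ℂ)) • tens (Psym d) (E0 d) + ((l4 : ℂ)) • tens (Pasym d) (E0 d),
    ((m1 : ℂ)) • tens (Ed d) (Psym d) + ((m2 : ℂ)) • tens (Ed d) (Pasym d) +
      ((m3 : ℂ)) • tens (E0 d) (Psym d) + ((m4 : ℂ)) • tens (E0 d) (Pasym d), ?_, ?_, ?_⟩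
  · exact ((((psd_smul_real (tens_proj_psd (psym_herm d) (psym_sq d) (ed_herm d) (ed_sq h0)) hl1).add
      (psd_smul_real (tens_proj_psd (pasym_herm d) (pasym_sq d) (ed_herm d) (ed_sq h0)) hl2)).add
      (psd_smul_real (tens_proj_psd (psym_herm d) (psym_sq d) (e0_herm d) (e0_sq h0)) hl3)).add
      (psd_smul_real (tens_proj_psd (pasym_herm d) (pasym_sq d) (e0_herm d) (e0_sq h0)) hl4))
  · exact ((((psd_smul_real (tens_proj_psd (ed_herm d) (ed_sq h0) (psym_herm d) (psym_sq d)) hm1).add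
      (psd_smul_real (tens_proj_psd (ed_herm d) (ed_sq h0) (pasym_herm d) (pasym_sq d)) hm2)).add
      (psd_smul_real (tens_proj_psd (e0_herm d) (e0_sq h0) (psym_herm d) (psym_sq d)) hm3)).add
      (psd_smul_real (tens_proj_psd (e0_herm d) (e0_sq h0) (pasym_herm d) (pasym_sq d)) hm4))
  · rw [choi_mapTensor, wernerState_eq hd p₁, ptr_wernerState hd p₂]
    simp only [Psym, Pasym, Ed, E0, ptranspose_add, ptranspose_sub, ptranspose_smul,
      ptranspose_tens, ptranspose_one, ptranspose_flip, ptranspose_om]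
    simp only [tens_add_left, tens_add_right, tens_sub_left, tens_sub_right, tens_smul_left,
      tens_smul_right, smul_add, smul_sub, smul_smul, ptranspose_add, ptranspose_sub,
      ptranspose_smul, ptranspose_tens, ptranspose_one, ptranspose_flip, ptranspose_om]
    match_scalars
    · linear_combination -hG1
    · linear_combination -hG3
    · linear_combination -hG2
    · linear_combination -hG4

end Aux3
section Aux4

variable {d : ℕ}

lemma trace_ptranspose_mul {A B : Type} [Fintype A] [Fintype B]
    (R X : Matrix (A × B) (A × B) ℂ) :
    (ptranspose R * X).trace = (R * ptranspose X).trace := by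
  simp only [Matrix.trace, Matrix.diag, Matrix.mul_apply, ptranspose, Fintype.sum_prod_type]
  refine Finset.sum_congr rfl fun a _ => ?_
  rw [Finset.sum_comm]
  conv_rhs => rw [Finset.sum_comm]
  refine Finset.sum_congr rfl fun a' _ => ?_
  exact Finset.sum_comm

/-- the witness operator -/
noncomputable def Xw (d : ℕ) : Matrix ((Fin d × Fin d) × (Fin d × Fin d))
    ((Fin d × Fin d) × (Fin d × Fin d)) ℂ :=
  ((2 : ℝ) : ℂ) • tens (Psym d) (E0 d) + ((2 * (d : ℝ) + 2 : ℝ) : ℂ) • tens (Pasym d) (Ed d)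

/-- the partial transpose of the witness -/
noncomputable def Yw (d : ℕ) : Matrix ((Fin d × Fin d) × (Fin d × Fin d))
    ((Fin d × Fin d) × (Fin d × Fin d)) ℂ :=
  ((2 : ℝ) : ℂ) • tens (E0 d) (Psym d) + ((2 * (d : ℝ) + 2 : ℝ) : ℂ) • tens (Ed d) (Pasym d)

lemma Xw_psd (hd : 2 ≤ d) : (Xw d).PosSemidef := by
  have h0 := dC0 hd
  exact (psd_smul_real (tens_proj_psd (psym_herm d) (psym_sq d) (e0_herm d) (e0_sq h0))
      (by norm_num)).add
    (psd_smul_real (tens_proj_psd (pasym_herm d) (pasym_sq d) (ed_herm d) (ed_sq h0))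
      (by positivity))

lemma Yw_psd (hd : 2 ≤ d) : (Yw d).PosSemidef := by
  have h0 := dC0 hd
  exact (psd_smul_real (tens_proj_psd (e0_herm d) (e0_sq h0) (psym_herm d) (psym_sq d))
      (by norm_num)).add
    (psd_smul_real (tens_proj_psd (ed_herm d) (ed_sq h0) (pasym_herm d) (pasym_sq d))
      (by positivity))

lemma ptranspose_Xw (hd : 2 ≤ d) : ptranspose (Xw d) = Yw d := by
  have h0 := dC0 hd
  unfold Xw Yw
  simp only [Psym, Pasym, Ed, E0, ptranspose_add, ptranspose_sub, ptranspose_smul,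
    ptranspose_tens, ptranspose_one, ptranspose_flip, ptranspose_om]
  simp only [tens_add_left, tens_add_right, tens_sub_left, tens_sub_right, tens_smul_left,
    tens_smul_right, smul_add, smul_sub, smul_smul, ptranspose_add, ptranspose_sub,
    ptranspose_smul, ptranspose_tens, ptranspose_one, ptranspose_flip, ptranspose_om]
  match_scalars <;> push_cast <;> field_simp <;> ring

set_option maxHeartbeats 2000000 in
lemma trace_CX (hd : 2 ≤ d) (p₁ p₂ : ℝ) :
    ((tens (wernerState d p₁) (ptranspose (wernerState d p₂))) * Xw d).trace =
      (((2 * (d : ℝ) + 2) / (d : ℝ) * (((d : ℝ) - 1) / ((d : ℝ) + 1) * (p₁ * p₂)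
        + (1 - p₁) * p₂ + p₁ * (1 - p₂) - (1 - p₁) * (1 - p₂)) : ℝ) : ℂ) := by
  have h0 := dC0 hd
  have hp := dCp hd
  have hm := dCm hd
  rw [wernerState_eq hd p₁, ptr_wernerState hd p₂]
  unfold Xw
  simp only [Psym, Pasym, Ed, E0]
  simp only [tens_add_left, tens_add_right, tens_sub_left, tens_sub_right, tens_smul_left,
    tens_smul_right, smul_add, smul_sub, smul_smul]
  simp only [add_mul, mul_add, sub_mul, mul_sub, Matrix.smul_mul, Matrix.mul_smul, smul_smul,
    tens_mul, one_mul, mul_one, flip_mul_flip, om_mul_om]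
  simp only [tens_smul_left, tens_smul_right, smul_smul]
  simp only [Matrix.trace_add, Matrix.trace_sub, Matrix.trace_smul, trace_tens, trace_flip,
    trace_om, Matrix.trace_one]
  simp only [Fintype.card_prod, Fintype.card_fin, smul_eq_mul]
  unfold wA wB
  push_cast
  field_simp
  ring

end Aux4
set_option maxHeartbeats 4000000 in
theorem stmt10 (d : ℕ) (hd : 2 ≤ d) (p₁ p₂ : ℝ)
    (h₁ : p₁ ∈ Set.Icc (0 : ℝ) 1) (h₂ : p₂ ∈ Set.Icc (0 : ℝ) 1) :
    IsDecomposable (mapTensor (wernerMap d p₁) (transposeMap (Fin d) ∘ₗ wernerMap d p₂)) ↔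
      0 ≤ ((d : ℝ) - 1) / ((d : ℝ) + 1) * (p₁ * p₂) + (1 - p₁) * p₂ + p₁ * (1 - p₂)
        - (1 - p₁) * (1 - p₂) := by
  have hdr : (2 : ℝ) ≤ (d : ℝ) := by exact_mod_cast hd
  have hdpos : (0 : ℝ) < (d : ℝ) := by linarith
  have hdp1 : (0 : ℝ) < (d : ℝ) + 1 := by linarith
  have hdm1 : (0 : ℝ) < (d : ℝ) - 1 := by linarith
  have h0c := dC0 hd
  have hpc := dCp hd
  have hmc := dCm hd
  obtain ⟨hp10, hp11⟩ := h₁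
  obtain ⟨hp20, hp21⟩ := h₂
  constructor
  · intro hdec
    rw [isDecomposable_iff] at hdec
    obtain ⟨P, R, hP, hR, hC⟩ := hdec
    rw [choi_mapTensor] at hC
    have htr : (0 : ℂ) ≤
        ((tens (wernerState d p₁) (ptranspose (wernerState d p₂))) * Xw d).trace := by
      rw [hC, Matrix.add_mul, Matrix.trace_add]
      have ht1 : (0 : ℂ) ≤ (P * Xw d).trace := psd_trace_mul_nonneg hP (Xw_psd hd)
      have ht2 : (0 : ℂ) ≤ (ptranspose R * Xw d).trace := by
        rw [trace_ptranspose_mul, ptranspose_Xw hd]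
        exact psd_trace_mul_nonneg hR (Yw_psd hd)
      exact add_nonneg ht1 ht2
    rw [trace_CX hd p₁ p₂] at htr
    have hreal : 0 ≤ (2 * (d : ℝ) + 2) / (d : ℝ) * (((d : ℝ) - 1) / ((d : ℝ) + 1) * (p₁ * p₂)
        + (1 - p₁) * p₂ + p₁ * (1 - p₂) - (1 - p₁) * (1 - p₂)) := by
      rw [← Complex.zero_le_real]
      exact_mod_cast htr
    have hfac : 0 < (2 * (d : ℝ) + 2) / (d : ℝ) := by positivity
    by_contra hneg
    push_neg at hneg
    have := mul_neg_of_pos_of_neg hfac hneg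
    linarith
  · intro hT
    rcases le_or_gt (1 / 2 : ℝ) p₂ with hp2 | hp2
    · -- Case A : p₂ ≥ 1/2, take R = 0
      have e1 : (0 : ℝ) ≤ p₁ / ((d : ℝ) + 1) := div_nonneg hp10 hdp1.le
      have f1 : (0 : ℝ) ≤ (1 - p₁) / ((d : ℝ) - 1) := div_nonneg (by linarith) hdm1.le
      have h2p : (0 : ℝ) ≤ 2 * p₂ - 1 := by linarith
      have hV : (0 : ℝ) ≤ ((d : ℝ) + 1 - 2 * p₂) / (((d : ℝ) + 1) * ((d : ℝ) - 1)) :=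
        div_nonneg (by linarith) (mul_pos hdp1 hdm1).le
      refine decomposable_of_coeffs hd p₁ p₂
        (2 * (p₁ / ((d : ℝ) + 1)) * (2 * p₂ - 1) / (d : ℝ) ^ 2)
        (2 * ((1 - p₁) / ((d : ℝ) - 1)) * (2 * p₂ - 1) / (d : ℝ) ^ 2)
        (2 * (p₁ / ((d : ℝ) + 1)) * (((d : ℝ) + 1 - 2 * p₂) / (((d : ℝ) + 1) * ((d : ℝ) - 1)))
          / (d : ℝ) ^ 2)
        (2 * ((1 - p₁) / ((d : ℝ) - 1)) * (((d : ℝ) + 1 - 2 * p₂) / (((d : ℝ) + 1) * ((d : ℝ) - 1)))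
          / (d : ℝ) ^ 2)
        0 0 0 0
        (by apply div_nonneg (mul_nonneg (by linarith) h2p) (by positivity))
        (by apply div_nonneg (mul_nonneg (by linarith) h2p) (by positivity))
        (by apply div_nonneg (mul_nonneg (by linarith) hV) (by positivity))
        (by apply div_nonneg (mul_nonneg (by linarith) hV) (by positivity))
        le_rfl le_rfl le_rfl le_rfl ?_ ?_ ?_ ?_ <;>
      · simp only [wA, wB]
        push_cast
        field_simp
        ring
    · rcases le_or_gt (1 / 2 : ℝ) p₁ with hp1 | hp1
      · -- Case B : p₁ ≥ 1/2, take P = 0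
        have e2 : (0 : ℝ) ≤ p₂ / ((d : ℝ) + 1) := div_nonneg hp20 hdp1.le
        have f2 : (0 : ℝ) ≤ (1 - p₂) / ((d : ℝ) - 1) := div_nonneg (by linarith) hdm1.le
        have h1p : (0 : ℝ) ≤ 2 * p₁ - 1 := by linarith
        have hU : (0 : ℝ) ≤ ((d : ℝ) + 1 - 2 * p₁) / (((d : ℝ) + 1) * ((d : ℝ) - 1)) :=
          div_nonneg (by linarith) (mul_pos hdp1 hdm1).le
        refine decomposable_of_coeffs hd p₁ p₂ 0 0 0 0
          (2 * (p₂ / ((d : ℝ) + 1)) * (2 * p₁ - 1) / (d : ℝ) ^ 2)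
          (2 * ((1 - p₂) / ((d : ℝ) - 1)) * (2 * p₁ - 1) / (d : ℝ) ^ 2)
          (2 * (((d : ℝ) + 1 - 2 * p₁) / (((d : ℝ) + 1) * ((d : ℝ) - 1)))
            * (p₂ / ((d : ℝ) + 1)) / (d : ℝ) ^ 2)
          (2 * (((d : ℝ) + 1 - 2 * p₁) / (((d : ℝ) + 1) * ((d : ℝ) - 1)))
            * ((1 - p₂) / ((d : ℝ) - 1)) / (d : ℝ) ^ 2)
          le_rfl le_rfl le_rfl le_rfl
          (by apply div_nonneg (mul_nonneg (by linarith) h1p) (by positivity))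
          (by apply div_nonneg (mul_nonneg (by linarith) h1p) (by positivity))
          (by apply div_nonneg (mul_nonneg (by linarith) e2) (by positivity))
          (by apply div_nonneg (mul_nonneg (by linarith) f2) (by positivity))
          ?_ ?_ ?_ ?_ <;>
        · simp only [wA, wB]
          push_cast
          field_simp
          ring
      · -- Case C : p₁ < 1/2, p₂ < 1/2
        have h1p : (0 : ℝ) ≤ 1 - 2 * p₁ := by linarith
        have h2p : (0 : ℝ) ≤ 1 - 2 * p₂ := by linarith
        have hTn : 0 ≤ ((d : ℝ) - 1) * (p₁ * p₂)
            + ((d : ℝ) + 1) * (2 * p₁ + 2 * p₂ - 3 * (p₁ * p₂) - 1) := by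
          have hh := mul_nonneg hdp1.le hT
          have heq : ((d : ℝ) + 1) * (((d : ℝ) - 1) / ((d : ℝ) + 1) * (p₁ * p₂)
              + (1 - p₁) * p₂ + p₁ * (1 - p₂) - (1 - p₁) * (1 - p₂))
              = ((d : ℝ) - 1) * (p₁ * p₂)
                + ((d : ℝ) + 1) * (2 * p₁ + 2 * p₂ - 3 * (p₁ * p₂) - 1) := by
            field_simp
            ring
          linarith [heq ▸ hh]
        have hm4n : (0 : ℝ) ≤ ((d : ℝ) - 1) * ((d : ℝ) + 1) * (1 - 2 * p₂)
            + 2 * p₁ * ((d : ℝ) + 1) * (1 + ((d : ℝ) - 2) * p₂) := by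
          have hx : (0 : ℝ) ≤ 1 + ((d : ℝ) - 2) * p₂ := by
            nlinarith [mul_nonneg (by linarith : (0:ℝ) ≤ (d : ℝ) - 2) hp20]
          have hA : (0 : ℝ) ≤ ((d : ℝ) - 1) * ((d : ℝ) + 1) * (1 - 2 * p₂) :=
            mul_nonneg (mul_nonneg hdm1.le hdp1.le) h2p
          have hB : (0 : ℝ) ≤ 2 * p₁ * ((d : ℝ) + 1) * (1 + ((d : ℝ) - 2) * p₂) :=
            mul_nonneg (mul_nonneg (by linarith) hdp1.le) hx
          linarith
        refine decomposable_of_coeffs hd p₁ p₂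
          (2 * ((d : ℝ) - 1) ^ 2 * ((d : ℝ) + 1) * (1 - 2 * p₁) * (1 - 2 * p₂)
            / ((d : ℝ) ^ 2 * ((d : ℝ) - 1) ^ 2 * ((d : ℝ) + 1) ^ 2))
          0 0
          (2 * ((d : ℝ) + 1) * (1 - 2 * p₁) * ((d : ℝ) + 1 - 2 * p₂)
            / ((d : ℝ) ^ 2 * ((d : ℝ) - 1) ^ 2 * ((d : ℝ) + 1) ^ 2))
          0 0
          (2 * ((d : ℝ) - 1) * (((d : ℝ) - 1) * (p₁ * p₂)
              + ((d : ℝ) + 1) * (2 * p₁ + 2 * p₂ - 3 * (p₁ * p₂) - 1))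
            / ((d : ℝ) ^ 2 * ((d : ℝ) - 1) ^ 2 * ((d : ℝ) + 1) ^ 2))
          ((2 : ℝ) * (((d : ℝ) - 1) * ((d : ℝ) + 1) * (1 - 2 * p₂)
              + 2 * p₁ * ((d : ℝ) + 1) * (1 + ((d : ℝ) - 2) * p₂))
            / ((d : ℝ) ^ 2 * ((d : ℝ) - 1) ^ 2 * ((d : ℝ) + 1) ^ 2))
          (by apply div_nonneg ?_ (by positivity)
              have := mul_nonneg (mul_nonneg (by positivity : (0:ℝ) ≤ 2 * ((d : ℝ) - 1) ^ 2
                * ((d : ℝ) + 1)) h1p) h2p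
              linarith [this])
          le_rfl le_rfl
          (by apply div_nonneg ?_ (by positivity)
              have := mul_nonneg (mul_nonneg (by positivity : (0:ℝ) ≤ 2 * ((d : ℝ) + 1)) h1p)
                (by linarith : (0:ℝ) ≤ (d : ℝ) + 1 - 2 * p₂)
              linarith [this])
          le_rfl le_rfl
          (by apply div_nonneg ?_ (by positivity)
              have := mul_nonneg (by linarith : (0:ℝ) ≤ 2 * ((d : ℝ) - 1)) hTn
              linarith [this])
          (by apply div_nonneg (by linarith) (by positivity))
          ?_ ?_ ?_ ?_ <;>
        · simp only [wA, wB]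
          push_cast
          field_simp
          ring

end TensorDecomp
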